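/- Let R = ℂ[A,B,C,D]/(AD − BC − 1) with a, b, c, d the images of A, B, C, D, and let B₀ be the ℂ-subalgebra of R generated by a and b. Then B₀ is exactly the equalizer of the two canonical maps R → R ⊗_{B₀} R: that is, {h ∈ R : h ⊗ 1 − 1 ⊗ h ∈ J_{B₀}} = B₀. -/

import Mathlib

/-!
Over the open set `a ≠ 0` of `SL₂` the coordinate `c` is free: `R[1/a] = ℂ[a^±1, b][c]`, and `R`
embeds into `K[X]`, `K = Frac ℂ[a, b]`, by `c ↦ X`, `d ↦ (bX + 1)/a`; symmetrically for `b ≠ 0`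
with `d ↦ X`, `c ↦ (aX - 1)/b`. Each embedding sends `B₀` into the constants `K`, so the two maps
`h ↦ φ h` and `h ↦ (φ h)(0)` agree on `B₀` and hence on the equalizer: an element `h` of the
equalizer goes to a constant. Clearing denominators, `aⁿ h = p(a, b)` and `bᵐ h = q(a, b)`, so
`bᵐ p = aⁿ q` in the UFD `ℂ[a, b]`, whence `p = aⁿ r`, `q = bᵐ r`. Since `ad - bc = 1`, the
powers `aⁿ` and `bᵐ` are coprime in `R`, and `h = r(a, b) ∈ B₀`.
-/

open TensorProduct

noncomputable section

namespace SL2Example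

/-- The ideal `(AD − BC − 1)` of `ℂ[A,B,C,D]`. -/
def sl2Ideal : Ideal (MvPolynomial (Fin 4) ℂ) :=
  Ideal.span {MvPolynomial.X 0 * MvPolynomial.X 3 - MvPolynomial.X 1 * MvPolynomial.X 2 - 1}

/-- The coordinate algebra `R = ℂ[A,B,C,D]/(AD − BC − 1)` of `SL₂(ℂ)`. -/
abbrev SL2Ring : Type := MvPolynomial (Fin 4) ℂ ⧸ sl2Ideal

/-- `a`, the image of `A` in `R`. -/
def aEl : SL2Ring := Ideal.Quotient.mk sl2Ideal (MvPolynomial.X 0)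

/-- `b`, the image of `B` in `R`. -/
def bEl : SL2Ring := Ideal.Quotient.mk sl2Ideal (MvPolynomial.X 1)

/-- `c`, the image of `C` in `R`. -/
def cEl : SL2Ring := Ideal.Quotient.mk sl2Ideal (MvPolynomial.X 2)

/-- `d`, the image of `D` in `R`. -/
def dEl : SL2Ring := Ideal.Quotient.mk sl2Ideal (MvPolynomial.X 3)

/-- `B₀ = ℂ[a,b]`, the subalgebra of `R` generated by `a` and `b`. -/
def B0 : Subalgebra ℂ SL2Ring := Algebra.adjoin ℂ {aEl, bEl}

end SL2Example
namespace SL2Example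

/-- `J_{B₀} ⊆ R ⊗ R`, the subspace spanned by `{xw ⊗ y − x ⊗ wy : x, y ∈ R, w ∈ B₀}`,
so that `R ⊗_{B₀} R = (R ⊗ R)/J_{B₀}`. -/
def JB0 : Submodule ℂ (SL2Ring ⊗[ℂ] SL2Ring) :=
  Submodule.span ℂ
    {z : SL2Ring ⊗[ℂ] SL2Ring |
      ∃ x y : SL2Ring, ∃ w ∈ B0, z = (x * w) ⊗ₜ[ℂ] y - x ⊗ₜ[ℂ] (w * y)}

end SL2Example

section TensorKer

variable {k A : Type*} [CommSemiring k] [CommRing A] [Algebra k A]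

def tensorKer (B : Subalgebra k A) : Submodule k (A ⊗[k] A) :=
  Submodule.span k {z | ∃ x y : A, ∃ w ∈ B, z = (x * w) ⊗ₜ[k] y - x ⊗ₜ[k] (w * y)}

theorem eq_of_tmul_sub_tmul_mem_tensorKer {P : Type*} [CommRing P] [Algebra k P]
    {B : Subalgebra k A} {f g : A →ₐ[k] P} (hB : B ≤ AlgHom.equalizer f g) {h : A}
    (hh : h ⊗ₜ[k] (1 : A) - (1 : A) ⊗ₜ[k] h ∈ tensorKer B) : f h = g h := by
  have hker : tensorKer B ≤ LinearMap.ker (Algebra.TensorProduct.productMap f g).toLinearMap := by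
    refine Submodule.span_le.mpr ?_
    rintro _ ⟨x, y, w, hw, rfl⟩
    have hfg : f w = g w := hB hw
    simp [hfg, mul_assoc]
  simpa [sub_eq_zero] using hker hh

theorem mem_range_C_of_tmul_sub_tmul_mem_tensorKer {S : Type*} [CommRing S] [Algebra k S]
    {B : Subalgebra k A} {φ : A →ₐ[k] Polynomial S}
    (hB : B ≤ (Polynomial.CAlgHom : S →ₐ[k] Polynomial S).range.comap φ) {h : A}
    (hh : h ⊗ₜ[k] (1 : A) - (1 : A) ⊗ₜ[k] h ∈ tensorKer B) :
    φ h ∈ (Polynomial.CAlgHom : S →ₐ[k] Polynomial S).range := by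
  let ε : Polynomial S →ₐ[k] Polynomial S :=
    Polynomial.CAlgHom.comp ((Polynomial.aeval (0 : S)).restrictScalars k)
  have hεB : B ≤ AlgHom.equalizer (ε.comp φ) φ := by
    intro w hw
    obtain ⟨u, hu⟩ : ∃ u, Polynomial.CAlgHom u = φ w := hB hw
    rw [AlgHom.mem_equalizer, AlgHom.comp_apply, ← hu]
    simp [ε]
  exact ⟨_, eq_of_tmul_sub_tmul_mem_tensorKer hεB hh⟩

end TensorKer

theorem exists_pow_mul_mem_of_adjoin_eq_top {k A : Type*} [CommSemiring k] [CommSemiring A]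
    [Algebra k A] {S : Set A} (hS : Algebra.adjoin k S = ⊤) {T : Subalgebra k A} {s : A}
    (hs : s ∈ T) (hST : ∀ y ∈ S, ∃ n : ℕ, s ^ n * y ∈ T) (x : A) : ∃ n : ℕ, s ^ n * x ∈ T := by
  have hx : x ∈ Algebra.adjoin k S := hS ▸ Algebra.mem_top
  induction hx using Algebra.adjoin_induction with
  | mem y hy => exact hST y hy
  | algebraMap r => exact ⟨0, by simp [T.algebraMap_mem r]⟩
  | add y z _ _ hy hz =>
    obtain ⟨n, hn⟩ := hy
    obtain ⟨m, hm⟩ := hz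
    refine ⟨n + m, ?_⟩
    rw [show s ^ (n + m) * (y + z) = s ^ m * (s ^ n * y) + s ^ n * (s ^ m * z) by ring]
    exact add_mem (mul_mem (pow_mem hs m) hn) (mul_mem (pow_mem hs n) hm)
  | mul y z _ _ hy hz =>
    obtain ⟨n, hn⟩ := hy
    obtain ⟨m, hm⟩ := hz
    refine ⟨n + m, ?_⟩
    rw [show s ^ (n + m) * (y * z) = (s ^ n * y) * (s ^ m * z) by ring]
    exact mul_mem hn hm

theorem IsCoprime.eq_of_pow_mul_eq {R : Type*} [CommSemiring R] {s t x y : R} (hst : IsCoprime s t)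
    {n m : ℕ} (hs : s ^ n * x = s ^ n * y) (ht : t ^ m * x = t ^ m * y) : x = y := by
  obtain ⟨α, β, hαβ⟩ := hst.pow (m := n) (n := m)
  calc x = (α * s ^ n + β * t ^ m) * x := by rw [hαβ, one_mul]
    _ = α * (s ^ n * x) + β * (t ^ m * x) := by ring
    _ = (α * s ^ n + β * t ^ m) * y := by rw [hs, ht]; ring
    _ = y := by rw [hαβ, one_mul]

theorem Prime.exists_eq_of_mul_eq_pow_mul {R : Type*} [CommRing R] [IsDomain R] {x y p q : R}
    (hx : Prime x) (hxy : ¬x ∣ y) {n m : ℕ} (h : y ^ m * p = x ^ n * q) :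
    ∃ r, p = x ^ n * r ∧ q = y ^ m * r := by
  obtain ⟨r, rfl⟩ : x ^ n ∣ p :=
    hx.pow_dvd_of_dvd_mul_left n (fun hdvd => hxy (hx.dvd_of_dvd_pow hdvd)) ⟨q, h⟩
  refine ⟨r, rfl, mul_left_cancel₀ (pow_ne_zero n hx.ne_zero) ?_⟩
  rw [← h]
  ring

namespace SL2Example

open Polynomial

theorem JB0_eq_tensorKer : JB0 = tensorKer B0 := rfl

theorem aEl_mul_dEl_sub_bEl_mul_cEl : aEl * dEl - bEl * cEl = 1 := by
  have h := Ideal.Quotient.eq_zero_iff_mem.mpr (Ideal.mem_span_singleton_self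
    (MvPolynomial.X 0 * MvPolynomial.X 3 - MvPolynomial.X 1 * MvPolynomial.X 2 - 1 :
      MvPolynomial (Fin 4) ℂ))
  rwa [map_sub, map_one, sub_eq_zero] at h

theorem isCoprime_aEl_bEl : IsCoprime aEl bEl :=
  ⟨dEl, -cEl, by linear_combination aEl_mul_dEl_sub_bEl_mul_cEl⟩

theorem adjoin_abcd_eq_top : Algebra.adjoin ℂ {aEl, bEl, cEl, dEl} = ⊤ := by
  have hgen : ({aEl, bEl, cEl, dEl} : Set SL2Ring) =
      Ideal.Quotient.mkₐ ℂ sl2Ideal '' Set.range MvPolynomial.X := by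
    ext y
    simp [Fin.exists_fin_succ, aEl, bEl, cEl, dEl, eq_comm]
  rw [hgen, Algebra.adjoin_image, MvPolynomial.adjoin_range_X, Algebra.map_top,
    AlgHom.range_eq_top]
  exact Ideal.Quotient.mkₐ_surjective ℂ sl2Ideal

def sl2Lift {S : Type*} [CommRing S] [Algebra ℂ S] (v : Fin 4 → S)
    (hv : v 0 * v 3 - v 1 * v 2 = 1) : SL2Ring →ₐ[ℂ] S :=
  Ideal.Quotient.liftₐ sl2Ideal (MvPolynomial.aeval v) fun F hF => by
    obtain ⟨G, rfl⟩ := Ideal.mem_span_singleton'.mp hF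
    simp [hv]

section sl2Lift

variable {S : Type*} [CommRing S] [Algebra ℂ S] (v : Fin 4 → S) (hv : v 0 * v 3 - v 1 * v 2 = 1)

@[simp] theorem sl2Lift_aEl : sl2Lift v hv aEl = v 0 := MvPolynomial.aeval_X v 0
@[simp] theorem sl2Lift_bEl : sl2Lift v hv bEl = v 1 := MvPolynomial.aeval_X v 1
@[simp] theorem sl2Lift_cEl : sl2Lift v hv cEl = v 2 := MvPolynomial.aeval_X v 2
@[simp] theorem sl2Lift_dEl : sl2Lift v hv dEl = v 3 := MvPolynomial.aeval_X v 3

end sl2Lift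

abbrev AB : Type := MvPolynomial (Fin 2) ℂ

def abEval : AB →ₐ[ℂ] SL2Ring := MvPolynomial.aeval ![aEl, bEl]

@[simp] theorem abEval_X_zero : abEval (MvPolynomial.X 0) = aEl := by simp [abEval]
@[simp] theorem abEval_X_one : abEval (MvPolynomial.X 1) = bEl := by simp [abEval]

theorem range_abEval : abEval.range = B0 := by
  rw [abEval, ← Algebra.adjoin_range_eq_range_aeval, Matrix.range_cons_cons_empty, B0]

def abEvalWith (t : SL2Ring) : AB[X] →ₐ[ℂ] SL2Ring :=
  eval₂AlgHom abEval t fun _ => Commute.all _ _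

@[simp] theorem abEvalWith_C (t : SL2Ring) (p : AB) : abEvalWith t (C p) = abEval p := by
  simp [abEvalWith]

@[simp] theorem abEvalWith_X (t : SL2Ring) : abEvalWith t X = t := by
  simp [abEvalWith]

theorem mem_range_abEvalWith {t : SL2Ring} : aEl ∈ (abEvalWith t).range ∧
    bEl ∈ (abEvalWith t).range ∧ t ∈ (abEvalWith t).range :=
  ⟨⟨C (MvPolynomial.X 0), by simp⟩, ⟨C (MvPolynomial.X 1), by simp⟩, ⟨X, by simp⟩⟩

theorem exists_pow_aEl_mul_mem_range (x : SL2Ring) :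
    ∃ n : ℕ, aEl ^ n * x ∈ (abEvalWith cEl).range := by
  obtain ⟨ha, hb, hc⟩ := mem_range_abEvalWith (t := cEl)
  refine exists_pow_mul_mem_of_adjoin_eq_top adjoin_abcd_eq_top ha ?_ x
  rintro y (rfl | rfl | rfl | rfl)
  iterate 3 exact ⟨0, by simpa⟩
  refine ⟨1, ?_⟩
  rw [pow_one, show aEl * dEl = bEl * cEl + 1 by linear_combination aEl_mul_dEl_sub_bEl_mul_cEl]
  exact add_mem (mul_mem hb hc) (one_mem _)

theorem exists_pow_bEl_mul_mem_range (x : SL2Ring) :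
    ∃ n : ℕ, bEl ^ n * x ∈ (abEvalWith dEl).range := by
  obtain ⟨ha, hb, hd⟩ := mem_range_abEvalWith (t := dEl)
  refine exists_pow_mul_mem_of_adjoin_eq_top adjoin_abcd_eq_top hb ?_ x
  rintro y (rfl | rfl | rfl | rfl)
  iterate 2 exact ⟨0, by simpa⟩
  · refine ⟨1, ?_⟩
    rw [pow_one, show bEl * cEl = aEl * dEl - 1 by linear_combination -aEl_mul_dEl_sub_bEl_mul_cEl]
    exact sub_mem (mul_mem ha hd) (one_mem _)
  · exact ⟨0, by simpa⟩

abbrev FracAB : Type := FractionRing AB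

def ι : AB →ₐ[ℂ] FracAB := IsScalarTower.toAlgHom ℂ AB FracAB

theorem ι_injective : Function.Injective ι := IsFractionRing.injective AB FracAB

theorem ι_X_ne_zero (i : Fin 2) : ι (MvPolynomial.X i) ≠ 0 :=
  (map_ne_zero_iff _ ι_injective).mpr (MvPolynomial.X_ne_zero i)

def chartC : SL2Ring →ₐ[ℂ] FracAB[X] :=
  sl2Lift ![C (ι (MvPolynomial.X 0)), C (ι (MvPolynomial.X 1)), X,
    C (ι (MvPolynomial.X 0))⁻¹ * (C (ι (MvPolynomial.X 1)) * X + 1)] <| by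
    have ha : C (ι (MvPolynomial.X 0)) * C (ι (MvPolynomial.X 0))⁻¹ = 1 := by
      rw [← C_mul, mul_inv_cancel₀ (ι_X_ne_zero 0), C_1]
    simp only [Matrix.cons_val]
    linear_combination (C (ι (MvPolynomial.X 1)) * X + 1) * ha

def chartD : SL2Ring →ₐ[ℂ] FracAB[X] :=
  sl2Lift ![C (ι (MvPolynomial.X 0)), C (ι (MvPolynomial.X 1)),
    C (ι (MvPolynomial.X 1))⁻¹ * (C (ι (MvPolynomial.X 0)) * X - 1), X] <| by
    have hb : C (ι (MvPolynomial.X 1)) * C (ι (MvPolynomial.X 1))⁻¹ = 1 := by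
      rw [← C_mul, mul_inv_cancel₀ (ι_X_ne_zero 1), C_1]
    simp only [Matrix.cons_val]
    linear_combination (1 - C (ι (MvPolynomial.X 0)) * X) * hb

theorem chartC_comp_abEvalWith : chartC.comp (abEvalWith cEl) = mapAlgHom ι := by
  refine algHom_ext' (MvPolynomial.algHom_ext fun i => ?_) (by simp [chartC])
  fin_cases i <;> simp [chartC]

theorem chartD_comp_abEvalWith : chartD.comp (abEvalWith dEl) = mapAlgHom ι := by
  refine algHom_ext' (MvPolynomial.algHom_ext fun i => ?_) (by simp [chartD])
  fin_cases i <;> simp [chartD]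

section Chart

variable {s t : SL2Ring} {φ : SL2Ring →ₐ[ℂ] FracAB[X]}

theorem map_abEval (hφ : φ.comp (abEvalWith t) = mapAlgHom ι) (p : AB) :
    φ (abEval p) = C (ι p) := by
  rw [← abEvalWith_C t, ← AlgHom.comp_apply, hφ, coe_mapAlgHom, map_C]
  rfl

theorem B0_le_comap_range_C (hφ : φ.comp (abEvalWith t) = mapAlgHom ι) :
    B0 ≤ (CAlgHom : FracAB →ₐ[ℂ] FracAB[X]).range.comap φ := by
  rw [← range_abEval]
  rintro _ ⟨p, rfl⟩
  exact ⟨ι p, (map_abEval hφ p).symm⟩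

theorem exists_pow_mul_eq_abEval_of_mem_equalizer (hφ : φ.comp (abEvalWith t) = mapAlgHom ι)
    (hs : s ∈ B0) (hden : ∀ x, ∃ n : ℕ, s ^ n * x ∈ (abEvalWith t).range) {h : SL2Ring}
    (hh : h ⊗ₜ[ℂ] (1 : SL2Ring) - (1 : SL2Ring) ⊗ₜ[ℂ] h ∈ JB0) :
    ∃ (n : ℕ) (p : AB), s ^ n * h = abEval p := by
  obtain ⟨u, hu⟩ : ∃ u, C u = φ h :=
    mem_range_C_of_tmul_sub_tmul_mem_tensorKer (B0_le_comap_range_C hφ) (JB0_eq_tensorKer ▸ hh)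
  obtain ⟨σ, hσ⟩ : ∃ σ, C σ = φ s := B0_le_comap_range_C hφ hs
  obtain ⟨n, hn⟩ := hden h
  obtain ⟨P, hP⟩ : ∃ P, abEvalWith t P = s ^ n * h := hn
  have hPC : P.map ι = C (σ ^ n * u) := by
    rw [← coe_mapAlgHom, ← hφ, AlgHom.comp_apply, hP, map_mul, map_pow, ← hu, ← hσ]
    simp
  have hdeg : P.natDegree = 0 := by
    rw [← natDegree_map_eq_of_injective (f := (ι : AB →+* FracAB)) ι_injective, hPC, natDegree_C]
  refine ⟨n, P.coeff 0, ?_⟩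
  rw [← hP, eq_C_of_natDegree_eq_zero hdeg, abEvalWith_C, coeff_C_zero]

end Chart

theorem abEval_injective : Function.Injective abEval := fun p q hpq =>
  ι_injective <| C_injective <| by
    rw [← map_abEval chartC_comp_abEvalWith, hpq, map_abEval chartC_comp_abEvalWith]

/-- `B₀` is exactly the equalizer of the two canonical maps
`R → R ⊗_{B₀} R`. -/
theorem sl2_equalizer_eq_B0 :
    {h : SL2Ring |
        h ⊗ₜ[ℂ] (1 : SL2Ring) - (1 : SL2Ring) ⊗ₜ[ℂ] h ∈ JB0} = (B0 : Set SL2Ring) := by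
  ext h
  refine ⟨fun hh => ?_, fun hh => Submodule.subset_span ⟨1, 1, h, hh, by rw [one_mul, mul_one]⟩⟩
  obtain ⟨n, p, hp⟩ := exists_pow_mul_eq_abEval_of_mem_equalizer chartC_comp_abEvalWith
    (Algebra.subset_adjoin (by simp)) exists_pow_aEl_mul_mem_range hh
  obtain ⟨m, q, hq⟩ := exists_pow_mul_eq_abEval_of_mem_equalizer chartD_comp_abEvalWith
    (Algebra.subset_adjoin (by simp)) exists_pow_bEl_mul_mem_range hh
  have hpq : MvPolynomial.X 1 ^ m * p = MvPolynomial.X 0 ^ n * q := abEval_injective <| by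
    simp only [map_mul, map_pow, abEval_X_zero, abEval_X_one, ← hp, ← hq]
    ring
  obtain ⟨r, rfl, rfl⟩ := MvPolynomial.X_prime.exists_eq_of_mul_eq_pow_mul (by simp) hpq
  have hr : h = abEval r := isCoprime_aEl_bEl.eq_of_pow_mul_eq (n := n) (m := m)
    (by simpa using hp) (by simpa using hq)
  exact hr ▸ range_abEval ▸ ⟨r, rfl⟩

end SL2Example
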